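/- Let R > 0, let K ∈ L¹(ℝ^n) have support contained in the closed ball {x : |x| ≤ R}, and let φ be a Schwartz function on ℝ^n. For m ∈ ℤ set K_m(x) = 2^{-mn} K(2^{-m} x) and φ_m(x) = 2^{-mn} φ(2^{-m} x). Then there exists a constant C > 0, depending only on n and on φ, such that for all j, k ∈ ℤ and all y ∈ ℝ^n with 0 < |y| ≤ 1 and 2^{-j} |y| ≥ 2R, ∫_{{x : |x| > 2|y|}} | (K_j * φ_{j+k})(x − y) − (K_j * φ_{j+k})(x) | dx ≤ C ‖K‖_{L¹} · (2^{-(j+k)} |y|)^{-1}. -/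

import Mathlib

open MeasureTheory Real
open scoped ENNReal

noncomputable section

/-- The dyadic dilation `K_m(x) = 2^{-mn} K(2^{-m} x)`. -/
noncomputable def dilate {n : ℕ} (K : EuclideanSpace ℝ (Fin n) → ℂ) (m : ℤ) :
    EuclideanSpace ℝ (Fin n) → ℂ :=
  fun x => ((2:ℝ) ^ (-(m * (n:ℤ)))) • K ((2:ℝ) ^ (-m) • x)

/-- Convolution `(f * g)(x) = ∫ f(x-y) g(y) dy`. -/
noncomputable def conv {n : ℕ} (f g : EuclideanSpace ℝ (Fin n) → ℂ) :
    EuclideanSpace ℝ (Fin n) → ℂ :=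
  fun x => ∫ y, f (x - y) * g y

section AuxLemmas

variable {n : ℕ}

lemma aux_lintegral_comp_smul (g : EuclideanSpace ℝ (Fin n) → ℝ≥0∞)
    (hg : AEMeasurable g (volume : Measure (EuclideanSpace ℝ (Fin n)))) {c : ℝ} (hc : 0 < c) :
    ∫⁻ x, g (c • x) ∂(volume : Measure (EuclideanSpace ℝ (Fin n)))
      = ENNReal.ofReal ((c ^ n)⁻¹) * ∫⁻ x, g x ∂volume := by
  have hc0 : c ≠ 0 := ne_of_gt hc
  have hmap := Measure.map_addHaar_smul (volume : Measure (EuclideanSpace ℝ (Fin n))) hc0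
  rw [finrank_euclideanSpace_fin, abs_of_pos (inv_pos.2 (pow_pos hc n))] at hmap
  have h1 : AEMeasurable g
      (Measure.map (fun x : EuclideanSpace ℝ (Fin n) => c • x)
        (volume : Measure (EuclideanSpace ℝ (Fin n)))) := by
    rw [hmap]; exact hg.smul_measure _
  have h2 := lintegral_map' h1 (measurable_const_smul c).aemeasurable
  rw [hmap, lintegral_smul_measure] at h2
  rw [← h2, smul_eq_mul]

lemma aux_shift (g : EuclideanSpace ℝ (Fin n) → ℝ≥0∞) {A T : Set (EuclideanSpace ℝ (Fin n))}
    (hA : MeasurableSet A) (hT : MeasurableSet T) (u : EuclideanSpace ℝ (Fin n))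
    (h : ∀ x ∈ A, x - u ∈ T) :
    ∫⁻ x in A, g (x - u) ∂volume ≤ ∫⁻ w in T, g w ∂volume := by
  calc ∫⁻ x in A, g (x - u) ∂volume
      = ∫⁻ x in A, T.indicator g (x - u) ∂volume :=
        setLIntegral_congr_fun hA (fun x hx =>
          (Set.indicator_of_mem (h x hx) g).symm)
    _ ≤ ∫⁻ x, T.indicator g (x - u) ∂volume := setLIntegral_le_lintegral _ _
    _ = ∫⁻ w, T.indicator g w ∂volume := lintegral_sub_right_eq_self (T.indicator g) u
    _ = ∫⁻ w in T, g w ∂volume := lintegral_indicator hT g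

lemma aux_conv_nnnorm_le (f g : EuclideanSpace ℝ (Fin n) → ℂ) (x : EuclideanSpace ℝ (Fin n)) :
    (‖conv f g x‖₊ : ℝ≥0∞) ≤ ∫⁻ z, (‖f z‖₊ : ℝ≥0∞) * (‖g (x - z)‖₊ : ℝ≥0∞) ∂volume := by
  have h : conv f g x = ∫ z, f z * g (x - z) := by
    have h0 := integral_sub_left_eq_self (fun z => f z * g (x - z))
      (volume : Measure (EuclideanSpace ℝ (Fin n))) x
    simp only [sub_sub_cancel] at h0
    exact h0
  rw [h]
  refine le_trans (enorm_integral_le_lintegral_enorm _) (le_of_eq ?_)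
  exact lintegral_congr fun z => by
    show (‖f z * g (x - z)‖₊ : ℝ≥0∞) = _
    rw [nnnorm_mul, ENNReal.coe_mul]

lemma dilate_nnnorm (f : EuclideanSpace ℝ (Fin n) → ℂ) (m : ℤ) (x : EuclideanSpace ℝ (Fin n)) :
    (‖dilate f m x‖₊ : ℝ≥0∞)
      = ENNReal.ofReal (((2:ℝ) ^ (-m)) ^ n) * (‖f ((2:ℝ) ^ (-m) • x)‖₊ : ℝ≥0∞) := by
  have h2 : (0:ℝ) < (2:ℝ) ^ (-m) := zpow_pos (by norm_num) _
  have he : ((2:ℝ) ^ (-(m * (n:ℤ)))) = ((2:ℝ) ^ (-m)) ^ n := by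
    rw [show -(m * (n:ℤ)) = (-m) * (n:ℤ) by ring, zpow_mul, zpow_natCast]
  have hd : dilate f m x = (((2:ℝ) ^ (-m)) ^ n) • f ((2:ℝ) ^ (-m) • x) := by
    rw [dilate, he]
  rw [hd, nnnorm_smul, ENNReal.coe_mul]
  congr 1
  show ‖((2:ℝ) ^ (-m)) ^ n‖ₑ = _
  rw [← ofReal_norm, Real.norm_eq_abs, abs_of_pos (pow_pos h2 n)]


lemma schwartz_tail (φ : SchwartzMap (EuclideanSpace ℝ (Fin n)) ℂ) :
    ∃ M : ℝ, 0 < M ∧ ∀ t : ℝ, 0 < t →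
      ∫⁻ u in {u : EuclideanSpace ℝ (Fin n) | t < ‖u‖}, (‖φ u‖₊ : ℝ≥0∞) ∂volume
        ≤ ENNReal.ofReal (M / t) := by
  have hInt : Integrable (fun u : EuclideanSpace ℝ (Fin n) => ‖u‖ * ‖φ u‖) volume := by
    simpa using φ.integrable_pow_mul volume 1
  have hg : Integrable (fun u : EuclideanSpace ℝ (Fin n) => (‖u‖ : ℝ) • φ u) volume := by
    refine hInt.mono' ?_ (Filter.Eventually.of_forall fun u => ?_)
    · exact (continuous_norm.smul φ.continuous).aestronglyMeasurable
    · rw [norm_smul, Real.norm_eq_abs, abs_of_nonneg (norm_nonneg _)]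
  have hI0 : (0:ℝ) ≤ ∫ u, ‖u‖ * ‖φ u‖ := integral_nonneg fun u => by positivity
  refine ⟨(∫ u, ‖u‖ * ‖φ u‖) + 1, by positivity, fun t ht => ?_⟩
  have hlin : ∫⁻ u, ((‖u‖₊ : ℝ≥0∞) * (‖φ u‖₊ : ℝ≥0∞)) ∂volume
      = ENNReal.ofReal (∫ u, ‖u‖ * ‖φ u‖) := by
    have h1 : ENNReal.ofReal (∫ u, ‖(‖u‖ : ℝ) • φ u‖)
        = ∫⁻ u, ((‖(‖u‖:ℝ) • φ u‖₊ : ℝ≥0∞)) ∂volume :=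
      ofReal_integral_norm_eq_lintegral_enorm hg
    have h2 : (∫ u, ‖(‖u‖ : ℝ) • φ u‖) = ∫ u, ‖u‖ * ‖φ u‖ :=
      integral_congr_ae (Filter.Eventually.of_forall fun u => by
        simp [norm_smul, abs_of_nonneg (norm_nonneg u)])
    have h3 : ∫⁻ u, ((‖(‖u‖:ℝ) • φ u‖₊ : ℝ≥0∞)) ∂volume
        = ∫⁻ u, (‖u‖₊:ℝ≥0∞) * (‖φ u‖₊:ℝ≥0∞) ∂volume :=
      lintegral_congr fun u => by rw [nnnorm_smul, ENNReal.coe_mul, nnnorm_norm]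
    rw [← h3, ← h1, h2]
  have hSmeas : MeasurableSet {u : EuclideanSpace ℝ (Fin n) | t < ‖u‖} :=
    measurableSet_lt measurable_const measurable_norm
  have ht0 : ENNReal.ofReal t ≠ 0 := by
    simp only [ne_eq, ENNReal.ofReal_eq_zero, not_le]; exact ht
  have step : ∀ᵐ u ∂(volume.restrict {u : EuclideanSpace ℝ (Fin n) | t < ‖u‖}),
      (‖φ u‖₊ : ℝ≥0∞) ≤ (ENNReal.ofReal t)⁻¹ * ((‖u‖₊ : ℝ≥0∞) * (‖φ u‖₊ : ℝ≥0∞)) := by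
    rw [ae_restrict_iff' hSmeas]
    refine Filter.Eventually.of_forall fun u hu => ?_
    have h1 : ENNReal.ofReal t ≤ (‖u‖₊ : ℝ≥0∞) := by
      show ENNReal.ofReal t ≤ ‖u‖ₑ
      rw [← ofReal_norm]
      exact ENNReal.ofReal_le_ofReal (le_of_lt hu)
    calc (‖φ u‖₊ : ℝ≥0∞)
        = (ENNReal.ofReal t)⁻¹ * (ENNReal.ofReal t * (‖φ u‖₊ : ℝ≥0∞)) := by
          rw [← mul_assoc, ENNReal.inv_mul_cancel ht0 ENNReal.ofReal_ne_top, one_mul]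
      _ ≤ (ENNReal.ofReal t)⁻¹ * ((‖u‖₊ : ℝ≥0∞) * (‖φ u‖₊ : ℝ≥0∞)) := by gcongr
  calc ∫⁻ u in {u : EuclideanSpace ℝ (Fin n) | t < ‖u‖}, (‖φ u‖₊ : ℝ≥0∞) ∂volume
      ≤ ∫⁻ u in {u : EuclideanSpace ℝ (Fin n) | t < ‖u‖},
          (ENNReal.ofReal t)⁻¹ * ((‖u‖₊ : ℝ≥0∞) * (‖φ u‖₊ : ℝ≥0∞)) ∂volume :=
        lintegral_mono_ae step
    _ = (ENNReal.ofReal t)⁻¹ * ∫⁻ u in {u : EuclideanSpace ℝ (Fin n) | t < ‖u‖},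
          (‖u‖₊ : ℝ≥0∞) * (‖φ u‖₊ : ℝ≥0∞) ∂volume :=
        lintegral_const_mul' _ _ (ENNReal.inv_ne_top.2 ht0)
    _ ≤ (ENNReal.ofReal t)⁻¹ * ∫⁻ u, (‖u‖₊ : ℝ≥0∞) * (‖φ u‖₊ : ℝ≥0∞) ∂volume := by
        gcongr
        exact Measure.restrict_le_self
    _ = (ENNReal.ofReal t)⁻¹ * ENNReal.ofReal (∫ u, ‖u‖ * ‖φ u‖) := by rw [hlin]
    _ ≤ ENNReal.ofReal (((∫ u, ‖u‖ * ‖φ u‖) + 1) / t) := by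
        rw [ENNReal.ofReal_div_of_pos ht, div_eq_mul_inv, mul_comm]
        gcongr
        · linarith


lemma aux_dilate_tail (φ : SchwartzMap (EuclideanSpace ℝ (Fin n)) ℂ) {M : ℝ}
    (htail : ∀ t : ℝ, 0 < t →
      ∫⁻ u in {u : EuclideanSpace ℝ (Fin n) | t < ‖u‖}, (‖φ u‖₊ : ℝ≥0∞) ∂volume
        ≤ ENNReal.ofReal (M / t))
    (m : ℤ) {r : ℝ} (hr : 0 < r) :
    ∫⁻ w in {w : EuclideanSpace ℝ (Fin n) | r < ‖w‖}, (‖dilate (⇑φ) m w‖₊ : ℝ≥0∞) ∂volume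
      ≤ ENNReal.ofReal (M / ((2:ℝ) ^ (-m) * r)) := by
  have hc : (0:ℝ) < (2:ℝ) ^ (-m) := zpow_pos (by norm_num) _
  have hTmeas : MeasurableSet {u : EuclideanSpace ℝ (Fin n) | (2:ℝ) ^ (-m) * r < ‖u‖} :=
    measurableSet_lt measurable_const measurable_norm
  have hSmeas : MeasurableSet {w : EuclideanSpace ℝ (Fin n) | r < ‖w‖} :=
    measurableSet_lt measurable_const measurable_norm
  have hφm : Measurable fun u : EuclideanSpace ℝ (Fin n) => (‖φ u‖₊ : ℝ≥0∞) :=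
    φ.continuous.measurable.enorm
  set T : Set (EuclideanSpace ℝ (Fin n)) :=
    {u : EuclideanSpace ℝ (Fin n) | (2:ℝ) ^ (-m) * r < ‖u‖} with hT
  set g : EuclideanSpace ℝ (Fin n) → ℝ≥0∞ :=
    fun u => T.indicator (fun u => (‖φ u‖₊ : ℝ≥0∞)) u with hgdef
  have hgmeas : AEMeasurable g volume := ((hφm.indicator hTmeas)).aemeasurable
  have key : ∀ w : EuclideanSpace ℝ (Fin n),
      ({w : EuclideanSpace ℝ (Fin n) | r < ‖w‖}).indicator
          (fun w => (‖dilate (⇑φ) m w‖₊ : ℝ≥0∞)) w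
        = ENNReal.ofReal (((2:ℝ) ^ (-m)) ^ n) * g ((2:ℝ) ^ (-m) • w) := by
    intro w
    have hmem : ((2:ℝ) ^ (-m) • w ∈ T) ↔ r < ‖w‖ := by
      simp only [hT, Set.mem_setOf_eq, norm_smul, Real.norm_eq_abs, abs_of_pos hc]
      exact mul_lt_mul_iff_right₀ hc
    by_cases hw : r < ‖w‖
    · rw [Set.indicator_of_mem (show w ∈ {w : EuclideanSpace ℝ (Fin n) | r < ‖w‖} from hw),
        hgdef]
      simp only []
      rw [Set.indicator_of_mem (hmem.2 hw)]
      exact dilate_nnnorm (⇑φ) m w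
    · rw [Set.indicator_of_notMem
          (show w ∉ {w : EuclideanSpace ℝ (Fin n) | r < ‖w‖} from hw), hgdef]
      simp only []
      rw [Set.indicator_of_notMem (fun hmem' => hw (hmem.1 hmem')), mul_zero]
  calc ∫⁻ w in {w : EuclideanSpace ℝ (Fin n) | r < ‖w‖}, (‖dilate (⇑φ) m w‖₊ : ℝ≥0∞) ∂volume
      = ∫⁻ w, ({w : EuclideanSpace ℝ (Fin n) | r < ‖w‖}).indicator
          (fun w => (‖dilate (⇑φ) m w‖₊ : ℝ≥0∞)) w ∂volume := (lintegral_indicator hSmeas _).symm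
    _ = ∫⁻ w, ENNReal.ofReal (((2:ℝ) ^ (-m)) ^ n) * g ((2:ℝ) ^ (-m) • w) ∂volume :=
        lintegral_congr key
    _ = ENNReal.ofReal (((2:ℝ) ^ (-m)) ^ n) * ∫⁻ w, g ((2:ℝ) ^ (-m) • w) ∂volume :=
        lintegral_const_mul' _ _ ENNReal.ofReal_ne_top
    _ = ENNReal.ofReal (((2:ℝ) ^ (-m)) ^ n)
          * (ENNReal.ofReal ((((2:ℝ) ^ (-m)) ^ n)⁻¹) * ∫⁻ u, g u ∂volume) := by
        rw [aux_lintegral_comp_smul g hgmeas hc]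
    _ = ∫⁻ u, g u ∂volume := by
        rw [← mul_assoc, ← ENNReal.ofReal_mul (by positivity),
          mul_inv_cancel₀ (by positivity), ENNReal.ofReal_one, one_mul]
    _ = ∫⁻ u in T, (‖φ u‖₊ : ℝ≥0∞) ∂volume := lintegral_indicator hTmeas _
    _ ≤ ENNReal.ofReal (M / ((2:ℝ) ^ (-m) * r)) := htail _ (by positivity)

lemma aux_dilate_K (K : EuclideanSpace ℝ (Fin n) → ℂ) (hK : Integrable K volume) (m : ℤ) :
    ∫⁻ z, (‖dilate K m z‖₊ : ℝ≥0∞) ∂volume = ENNReal.ofReal (∫ x, ‖K x‖) := by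
  have hc : (0:ℝ) < (2:ℝ) ^ (-m) := zpow_pos (by norm_num) _
  calc ∫⁻ z, (‖dilate K m z‖₊ : ℝ≥0∞) ∂volume
      = ∫⁻ z, ENNReal.ofReal (((2:ℝ) ^ (-m)) ^ n)
          * (‖K ((2:ℝ) ^ (-m) • z)‖₊ : ℝ≥0∞) ∂volume := lintegral_congr (dilate_nnnorm K m)
    _ = ENNReal.ofReal (((2:ℝ) ^ (-m)) ^ n)
          * ∫⁻ z, (‖K ((2:ℝ) ^ (-m) • z)‖₊ : ℝ≥0∞) ∂volume :=
        lintegral_const_mul' _ _ ENNReal.ofReal_ne_top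
    _ = ENNReal.ofReal (((2:ℝ) ^ (-m)) ^ n)
          * (ENNReal.ofReal ((((2:ℝ) ^ (-m)) ^ n)⁻¹) * ∫⁻ z, (‖K z‖₊ : ℝ≥0∞) ∂volume) := by
        rw [aux_lintegral_comp_smul (fun z => (‖K z‖₊ : ℝ≥0∞)) hK.aestronglyMeasurable.enorm hc]
    _ = ∫⁻ z, (‖K z‖₊ : ℝ≥0∞) ∂volume := by
        rw [← mul_assoc, ← ENNReal.ofReal_mul (by positivity),
          mul_inv_cancel₀ (by positivity), ENNReal.ofReal_one, one_mul]
    _ = ENNReal.ofReal (∫ x, ‖K x‖) := (ofReal_integral_norm_eq_lintegral_enorm hK).symm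

lemma key_estimate (φ : SchwartzMap (EuclideanSpace ℝ (Fin n)) ℂ) {M : ℝ}
    (htail : ∀ t : ℝ, 0 < t →
      ∫⁻ u in {u : EuclideanSpace ℝ (Fin n) | t < ‖u‖}, (‖φ u‖₊ : ℝ≥0∞) ∂volume
        ≤ ENNReal.ofReal (M / t))
    (K : EuclideanSpace ℝ (Fin n) → ℂ) (hK : Integrable K volume)
    (j m : ℤ) {A : Set (EuclideanSpace ℝ (Fin n))} (hAmeas : MeasurableSet A)
    {b : ℝ} (hsuppb : ∀ z : EuclideanSpace ℝ (Fin n), dilate K j z ≠ 0 → ‖z‖ ≤ b)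
    (hKj : Integrable (dilate K j) volume)
    (v : EuclideanSpace ℝ (Fin n)) {r : ℝ} (hr : 0 < r)
    (hgeom : ∀ x ∈ A, ∀ z : EuclideanSpace ℝ (Fin n), ‖z‖ ≤ b → r < ‖x - v - z‖) :
    ∫⁻ x in A, (∫⁻ z, (‖dilate K j z‖₊ : ℝ≥0∞)
        * (‖dilate (⇑φ) m (x - v - z)‖₊ : ℝ≥0∞) ∂volume) ∂volume
      ≤ ENNReal.ofReal (∫ x, ‖K x‖) * ENNReal.ofReal (M / ((2:ℝ) ^ (-m) * r)) := by
  have hKnn : AEMeasurable (fun z => (‖dilate K j z‖₊ : ℝ≥0∞)) volume :=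
    hKj.aestronglyMeasurable.enorm
  have hφcont : Continuous (dilate (⇑φ) m) := by
    unfold dilate
    exact ((φ.continuous.comp (continuous_const_smul ((2:ℝ) ^ (-m)))).const_smul ((2:ℝ) ^ (-(m * (n:ℤ)))))
  have hTmeas : MeasurableSet {w : EuclideanSpace ℝ (Fin n) | r < ‖w‖} :=
    measurableSet_lt measurable_const measurable_norm
  have hprod : AEMeasurable (Function.uncurry fun (x z : EuclideanSpace ℝ (Fin n)) =>
      (‖dilate K j z‖₊ : ℝ≥0∞) * (‖dilate (⇑φ) m (x - v - z)‖₊ : ℝ≥0∞))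
      ((volume.restrict A).prod volume) := by
    refine AEMeasurable.fun_mul ?_ ?_
    · exact hKnn.comp_snd
    · exact ((hφcont.comp ((continuous_fst.sub continuous_const).sub
        continuous_snd)).measurable.enorm).aemeasurable
  rw [lintegral_lintegral_swap hprod]
  have inner_bound : ∀ z : EuclideanSpace ℝ (Fin n),
      ∫⁻ x in A, (‖dilate K j z‖₊ : ℝ≥0∞) * (‖dilate (⇑φ) m (x - v - z)‖₊ : ℝ≥0∞) ∂volume
        ≤ (‖dilate K j z‖₊ : ℝ≥0∞) * ENNReal.ofReal (M / ((2:ℝ) ^ (-m) * r)) := by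
    intro z
    by_cases hz : dilate K j z = 0
    · simp [hz]
    · have hz2 := hsuppb z hz
      rw [lintegral_const_mul' _ _ ENNReal.coe_ne_top]
      refine mul_le_mul_right ?_ _
      have hshift : ∀ x ∈ A, x - (v + z) ∈ {w : EuclideanSpace ℝ (Fin n) | r < ‖w‖} := by
        intro x hx
        have h0 := hgeom x hx z hz2
        show r < ‖x - (v + z)‖
        rw [sub_add_eq_sub_sub]
        exact h0
      calc ∫⁻ x in A, (‖dilate (⇑φ) m (x - v - z)‖₊ : ℝ≥0∞) ∂volume
          = ∫⁻ x in A, (‖dilate (⇑φ) m (x - (v + z))‖₊ : ℝ≥0∞) ∂volume :=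
            lintegral_congr fun x => by rw [sub_add_eq_sub_sub]
        _ ≤ ∫⁻ w in {w : EuclideanSpace ℝ (Fin n) | r < ‖w‖},
              (‖dilate (⇑φ) m w‖₊ : ℝ≥0∞) ∂volume :=
            aux_shift _ hAmeas hTmeas _ hshift
        _ ≤ ENNReal.ofReal (M / ((2:ℝ) ^ (-m) * r)) := aux_dilate_tail φ htail m hr
  calc ∫⁻ z, ∫⁻ x in A, (‖dilate K j z‖₊ : ℝ≥0∞)
          * (‖dilate (⇑φ) m (x - v - z)‖₊ : ℝ≥0∞) ∂volume ∂volume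
      ≤ ∫⁻ z, (‖dilate K j z‖₊ : ℝ≥0∞) * ENNReal.ofReal (M / ((2:ℝ) ^ (-m) * r)) ∂volume :=
        lintegral_mono inner_bound
    _ = (∫⁻ z, (‖dilate K j z‖₊ : ℝ≥0∞) ∂volume) * ENNReal.ofReal (M / ((2:ℝ) ^ (-m) * r)) :=
        lintegral_mul_const' _ _ ENNReal.ofReal_ne_top
    _ = ENNReal.ofReal (∫ x, ‖K x‖) * ENNReal.ofReal (M / ((2:ℝ) ^ (-m) * r)) := by
        rw [aux_dilate_K K hK j]

end AuxLemmas

theorem far_field_estimate_for_convolved_kernels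
    (n : ℕ) (φ : SchwartzMap (EuclideanSpace ℝ (Fin n)) ℂ) :
    ∃ C : ℝ, 0 < C ∧
      ∀ (R : ℝ), 0 < R →
      ∀ K : EuclideanSpace ℝ (Fin n) → ℂ, Integrable K volume →
        Function.support K ⊆ Metric.closedBall (0 : EuclideanSpace ℝ (Fin n)) R →
        ∀ (j k : ℤ) (y : EuclideanSpace ℝ (Fin n)), 0 < ‖y‖ → ‖y‖ ≤ 1 →
          2 * R ≤ (2:ℝ) ^ (-j) * ‖y‖ →
          (∫⁻ x in {x : EuclideanSpace ℝ (Fin n) | 2 * ‖y‖ < ‖x‖},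
              (‖conv (dilate K j) (dilate (⇑φ) (j + k)) (x - y)
                - conv (dilate K j) (dilate (⇑φ) (j + k)) x‖₊ : ℝ≥0∞) ∂volume)
            ≤ ENNReal.ofReal (C * (∫ x, ‖K x‖) * ((2:ℝ) ^ (-(j + k)) * ‖y‖)⁻¹) := by
  obtain ⟨M, hM, htail⟩ := schwartz_tail φ
  refine ⟨3 * M, by positivity, ?_⟩
  intro R hR K hK hsupp j k y hy0 hy1 hyR
  have hcj : (0:ℝ) < (2:ℝ) ^ (-j) := zpow_pos (by norm_num) _
  have hcm : (0:ℝ) < (2:ℝ) ^ (-(j + k)) := zpow_pos (by norm_num) _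
  have hAmeas : MeasurableSet {x : EuclideanSpace ℝ (Fin n) | 2 * ‖y‖ < ‖x‖} :=
    measurableSet_lt measurable_const measurable_norm
  -- support bound
  have hzsupp : ∀ z : EuclideanSpace ℝ (Fin n), dilate K j z ≠ 0 → ‖z‖ ≤ ‖y‖ / 2 := by
    intro z hz
    have h1 : K ((2:ℝ) ^ (-j) • z) ≠ 0 := by
      intro h
      apply hz
      show ((2:ℝ) ^ (-(j * (n:ℤ)))) • K ((2:ℝ) ^ (-j) • z) = 0
      rw [h, smul_zero]
    have h2 := hsupp (Function.mem_support.2 h1)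
    rw [Metric.mem_closedBall, dist_zero_right, norm_smul, Real.norm_eq_abs,
      abs_of_pos hcj] at h2
    nlinarith
  -- integrability of the dilated kernel
  have hKj : Integrable (dilate K j) volume := by
    have h1 : Integrable (fun x : EuclideanSpace ℝ (Fin n) => K ((2:ℝ) ^ (-j) • x)) volume :=
      hK.comp_smul (ne_of_gt hcj)
    exact h1.smul ((2:ℝ) ^ (-(j * (n:ℤ))))
  -- measurable representative of the dilated kernel's norm
  have hKnn : AEMeasurable (fun z => (‖dilate K j z‖₊ : ℝ≥0∞)) volume :=
    hKj.aestronglyMeasurable.enorm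
  set N : EuclideanSpace ℝ (Fin n) → ℝ≥0∞ := hKnn.mk _ with hN
  have hNmeas : Measurable N := hKnn.measurable_mk
  have hNae : (fun z => (‖dilate K j z‖₊ : ℝ≥0∞)) =ᵐ[volume] N := hKnn.ae_eq_mk
  have hφcont : Continuous (dilate (⇑φ) (j + k)) := by
    unfold dilate
    exact ((φ.continuous.comp (continuous_const_smul ((2:ℝ) ^ (-(j + k))))).const_smul ((2:ℝ) ^ (-((j + k) * (n:ℤ)))))
  have hGrw : ∀ (v x : EuclideanSpace ℝ (Fin n)),
      (∫⁻ z, (‖dilate K j z‖₊ : ℝ≥0∞)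
          * (‖dilate (⇑φ) (j + k) (x - v - z)‖₊ : ℝ≥0∞) ∂volume)
        = ∫⁻ z, N z * (‖dilate (⇑φ) (j + k) (x - v - z)‖₊ : ℝ≥0∞) ∂volume := by
    intro v x
    refine lintegral_congr_ae ?_
    filter_upwards [hNae] with z hz
    rw [hz]
  have hG'meas : ∀ v : EuclideanSpace ℝ (Fin n),
      Measurable (fun x => ∫⁻ z, N z
        * (‖dilate (⇑φ) (j + k) (x - v - z)‖₊ : ℝ≥0∞) ∂volume) := by
    intro v
    exact Measurable.lintegral_prod_right
      ((hNmeas.comp measurable_snd).mul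
        ((hφcont.comp ((continuous_fst.sub continuous_const).sub
          continuous_snd)).measurable.enorm))
  -- pointwise bound
  have hpt : ∀ x : EuclideanSpace ℝ (Fin n),
      (‖conv (dilate K j) (dilate (⇑φ) (j + k)) (x - y)
          - conv (dilate K j) (dilate (⇑φ) (j + k)) x‖₊ : ℝ≥0∞)
        ≤ (∫⁻ z, (‖dilate K j z‖₊ : ℝ≥0∞)
              * (‖dilate (⇑φ) (j + k) (x - y - z)‖₊ : ℝ≥0∞) ∂volume)
          + ∫⁻ z, (‖dilate K j z‖₊ : ℝ≥0∞)
              * (‖dilate (⇑φ) (j + k) (x - 0 - z)‖₊ : ℝ≥0∞) ∂volume := by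
    intro x
    calc (‖conv (dilate K j) (dilate (⇑φ) (j + k)) (x - y)
            - conv (dilate K j) (dilate (⇑φ) (j + k)) x‖₊ : ℝ≥0∞)
        ≤ (‖conv (dilate K j) (dilate (⇑φ) (j + k)) (x - y)‖₊ : ℝ≥0∞)
            + (‖conv (dilate K j) (dilate (⇑φ) (j + k)) x‖₊ : ℝ≥0∞) := by
          exact_mod_cast nnnorm_sub_le _ _
      _ ≤ _ := by
          refine add_le_add (aux_conv_nnnorm_le _ _ _) ?_
          simpa only [sub_zero] using
            aux_conv_nnnorm_le (dilate K j) (dilate (⇑φ) (j + k)) x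
  -- geometry
  have hg1 : ∀ x ∈ {x : EuclideanSpace ℝ (Fin n) | 2 * ‖y‖ < ‖x‖},
      ∀ z : EuclideanSpace ℝ (Fin n), ‖z‖ ≤ ‖y‖ / 2 → ‖y‖ / 2 < ‖x - y - z‖ := by
    intro x hx z hz
    have hx' : 2 * ‖y‖ < ‖x‖ := hx
    have t1 : ‖x‖ - ‖y‖ ≤ ‖x - y‖ := norm_sub_norm_le x y
    have t2 : ‖x - y‖ - ‖z‖ ≤ ‖x - y - z‖ := norm_sub_norm_le (x - y) z
    linarith
  have hg2 : ∀ x ∈ {x : EuclideanSpace ℝ (Fin n) | 2 * ‖y‖ < ‖x‖},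
      ∀ z : EuclideanSpace ℝ (Fin n), ‖z‖ ≤ ‖y‖ / 2 → ‖y‖ < ‖x - 0 - z‖ := by
    intro x hx z hz
    have hx' : 2 * ‖y‖ < ‖x‖ := hx
    rw [sub_zero]
    have t2 : ‖x‖ - ‖z‖ ≤ ‖x - z‖ := norm_sub_norm_le x z
    linarith
  have hIK : (0:ℝ) ≤ ∫ x, ‖K x‖ := integral_nonneg fun x => norm_nonneg _
  have hyne : ‖y‖ ≠ 0 := ne_of_gt hy0
  have hcmne : ((2:ℝ) ^ (-(j + k))) ≠ 0 := ne_of_gt hcm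
  calc (∫⁻ x in {x : EuclideanSpace ℝ (Fin n) | 2 * ‖y‖ < ‖x‖},
          (‖conv (dilate K j) (dilate (⇑φ) (j + k)) (x - y)
            - conv (dilate K j) (dilate (⇑φ) (j + k)) x‖₊ : ℝ≥0∞) ∂volume)
      ≤ ∫⁻ x in {x : EuclideanSpace ℝ (Fin n) | 2 * ‖y‖ < ‖x‖},
          ((∫⁻ z, (‖dilate K j z‖₊ : ℝ≥0∞)
              * (‖dilate (⇑φ) (j + k) (x - y - z)‖₊ : ℝ≥0∞) ∂volume)
            + ∫⁻ z, (‖dilate K j z‖₊ : ℝ≥0∞)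
              * (‖dilate (⇑φ) (j + k) (x - 0 - z)‖₊ : ℝ≥0∞) ∂volume) ∂volume :=
        lintegral_mono hpt
    _ = ∫⁻ x in {x : EuclideanSpace ℝ (Fin n) | 2 * ‖y‖ < ‖x‖},
          ((∫⁻ z, N z * (‖dilate (⇑φ) (j + k) (x - y - z)‖₊ : ℝ≥0∞) ∂volume)
            + ∫⁻ z, N z * (‖dilate (⇑φ) (j + k) (x - 0 - z)‖₊ : ℝ≥0∞) ∂volume) ∂volume :=
        lintegral_congr fun x => by rw [hGrw y x, hGrw 0 x]
    _ = (∫⁻ x in {x : EuclideanSpace ℝ (Fin n) | 2 * ‖y‖ < ‖x‖},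
          (∫⁻ z, N z * (‖dilate (⇑φ) (j + k) (x - y - z)‖₊ : ℝ≥0∞) ∂volume) ∂volume)
        + ∫⁻ x in {x : EuclideanSpace ℝ (Fin n) | 2 * ‖y‖ < ‖x‖},
          (∫⁻ z, N z * (‖dilate (⇑φ) (j + k) (x - 0 - z)‖₊ : ℝ≥0∞) ∂volume) ∂volume :=
        lintegral_add_left (hG'meas y) _
    _ = (∫⁻ x in {x : EuclideanSpace ℝ (Fin n) | 2 * ‖y‖ < ‖x‖},
          (∫⁻ z, (‖dilate K j z‖₊ : ℝ≥0∞)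
            * (‖dilate (⇑φ) (j + k) (x - y - z)‖₊ : ℝ≥0∞) ∂volume) ∂volume)
        + ∫⁻ x in {x : EuclideanSpace ℝ (Fin n) | 2 * ‖y‖ < ‖x‖},
          (∫⁻ z, (‖dilate K j z‖₊ : ℝ≥0∞)
            * (‖dilate (⇑φ) (j + k) (x - 0 - z)‖₊ : ℝ≥0∞) ∂volume) ∂volume := by
        rw [lintegral_congr fun x => (hGrw y x).symm, lintegral_congr fun x => (hGrw 0 x).symm]
    _ ≤ (ENNReal.ofReal (∫ x, ‖K x‖)
            * ENNReal.ofReal (M / ((2:ℝ) ^ (-(j + k)) * (‖y‖ / 2))))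
        + ENNReal.ofReal (∫ x, ‖K x‖)
            * ENNReal.ofReal (M / ((2:ℝ) ^ (-(j + k)) * ‖y‖)) :=
        add_le_add
          (key_estimate φ htail K hK j (j + k) hAmeas hzsupp hKj y (by linarith) hg1)
          (key_estimate φ htail K hK j (j + k) hAmeas hzsupp hKj 0 hy0 hg2)
    _ ≤ ENNReal.ofReal (3 * M * (∫ x, ‖K x‖) * ((2:ℝ) ^ (-(j + k)) * ‖y‖)⁻¹) := by
        rw [← ENNReal.ofReal_mul hIK, ← ENNReal.ofReal_mul hIK,
          ← ENNReal.ofReal_add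
            (mul_nonneg hIK (div_nonneg hM.le (by positivity)))
            (mul_nonneg hIK (div_nonneg hM.le (by positivity)))]
        refine ENNReal.ofReal_le_ofReal (le_of_eq ?_)
        field_simp
        ring
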